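/- A simple involution avoids 2341 if and only if either it equals the permutation 5274163 or it avoids 123. Equivalently, the set of simple 2341-avoiding involutions consists exactly of the permutation 5274163 together with the simple involutions avoiding 123. -/

import Mathlib

/-- `π` contains the pattern `σ`. -/
def Contains {n k : ℕ} (π : Equiv.Perm (Fin n)) (σ : Equiv.Perm (Fin k)) : Prop :=
  ∃ f : Fin k → Fin n, StrictMono f ∧ ∀ i j : Fin k, σ i < σ j ↔ π (f i) < π (f j)

def IsInvolution {n : ℕ} (π : Equiv.Perm (Fin n)) : Prop := π⁻¹ = π

/-- direct sum of permutations -/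
def directSum {m n : ℕ} (σ : Equiv.Perm (Fin m)) (τ : Equiv.Perm (Fin n)) :
    Equiv.Perm (Fin (m + n)) :=
  finSumFinEquiv.symm.trans ((Equiv.sumCongr σ τ).trans finSumFinEquiv)

/-- skew sum of permutations -/
def skewSum {m n : ℕ} (σ : Equiv.Perm (Fin m)) (τ : Equiv.Perm (Fin n)) :
    Equiv.Perm (Fin (m + n)) :=
  finSumFinEquiv.symm.trans ((Equiv.sumCongr σ τ).trans
    ((Equiv.sumComm (Fin m) (Fin n)).trans (finSumFinEquiv.trans (finCongr (Nat.add_comm n m)))))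

def SumDecomposable {n : ℕ} (π : Equiv.Perm (Fin n)) : Prop :=
  ∃ (a b : ℕ) (h : a + b = n), 0 < a ∧ 0 < b ∧
    ∃ (σ : Equiv.Perm (Fin a)) (τ : Equiv.Perm (Fin b)),
      π = (finCongr h).permCongr (directSum σ τ)

def SkewDecomposable {n : ℕ} (π : Equiv.Perm (Fin n)) : Prop :=
  ∃ (a b : ℕ) (h : a + b = n), 0 < a ∧ 0 < b ∧
    ∃ (σ : Equiv.Perm (Fin a)) (τ : Equiv.Perm (Fin b)),
      π = (finCongr h).permCongr (skewSum σ τ)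

/-- a set of contiguous indices/values -/
def SetContiguous {n : ℕ} (S : Set (Fin n)) : Prop :=
  ∀ ⦃i j k : Fin n⦄, i ∈ S → j ∈ S → i ≤ k → k ≤ j → k ∈ S

/-- an interval of the permutation `π` -/
def IsPermInterval {n : ℕ} (π : Equiv.Perm (Fin n)) (S : Set (Fin n)) : Prop :=
  SetContiguous S ∧ SetContiguous (π '' S)

/-- A permutation of length at least 2 is simple if all its intervals are trivial. -/
def IsSimple {n : ℕ} (π : Equiv.Perm (Fin n)) : Prop :=
  2 ≤ n ∧ ∀ S : Set (Fin n), IsPermInterval π S → S.ncard ≤ 1 ∨ S = Set.univ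

-- patterns (0-indexed one-line notation)
noncomputable def p123 : Equiv.Perm (Fin 3) := Equiv.ofBijective ![0, 1, 2] (by decide)
noncomputable def p132 : Equiv.Perm (Fin 3) := Equiv.ofBijective ![0, 2, 1] (by decide)
noncomputable def p213 : Equiv.Perm (Fin 3) := Equiv.ofBijective ![1, 0, 2] (by decide)
noncomputable def p1324 : Equiv.Perm (Fin 4) := Equiv.ofBijective ![0, 2, 1, 3] (by decide)
noncomputable def p1234 : Equiv.Perm (Fin 4) := Equiv.ofBijective ![0, 1, 2, 3] (by decide)
noncomputable def p1342 : Equiv.Perm (Fin 4) := Equiv.ofBijective ![0, 2, 3, 1] (by decide)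
noncomputable def p1423 : Equiv.Perm (Fin 4) := Equiv.ofBijective ![0, 3, 1, 2] (by decide)
noncomputable def p2341 : Equiv.Perm (Fin 4) := Equiv.ofBijective ![1, 2, 3, 0] (by decide)
noncomputable def p2413 : Equiv.Perm (Fin 4) := Equiv.ofBijective ![1, 3, 0, 2] (by decide)
noncomputable def p5274163 : Equiv.Perm (Fin 7) := Equiv.ofBijective ![4, 1, 6, 3, 0, 5, 2] (by decide)

-- the order-respecting equivalence between a lexicographic sigma of Fins and a Fin
noncomputable def finSigmaOrderEquiv {m : ℕ} (k : Fin m → ℕ) :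
    (Σₗ i : Fin m, Fin (k i)) ≃o Fin (∑ i, k i) :=
  (monoEquivOfFin (Σₗ i : Fin m, Fin (k i)) (by
    rw [Fintype.card_congr (ofLex : _ ≃ (Σ i : Fin m, Fin (k i)))]
    simp)).symm

/-- the inflation `σ[α 0, …, α (m-1)]` -/
noncomputable def inflation {m : ℕ} (σ : Equiv.Perm (Fin m)) (k : Fin m → ℕ)
    (α : ∀ i, Equiv.Perm (Fin (k i))) : Equiv.Perm (Fin (∑ i, k i)) :=
  ((finSigmaOrderEquiv k).toEquiv.symm.trans
    ((ofLex : (Σₗ i : Fin m, Fin (k i)) ≃ (Σ i : Fin m, Fin (k i))).trans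
      ((Equiv.sigmaCongr σ fun i =>
          (α i).trans (finCongr (congrArg k (σ.symm_apply_apply i).symm))).trans
        ((toLex : (Σ t : Fin m, Fin (k (σ.symm t))) ≃ (Σₗ t : Fin m, Fin (k (σ.symm t)))).trans
          ((finSigmaOrderEquiv fun t => k (σ.symm t)).toEquiv.trans
            (finCongr (Equiv.sum_comp σ.symm k)))))))

/-!
Let `π` be a simple involution avoiding `2341`, hence also `4123 = 2341⁻¹`, and containing `123`.
Take the occurrence `a < b < c` of `123` with `c` least, then `b` least, then `a` least.
Minimality and the two forbidden patterns confine `π x` to a few ranges determined by where `x`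
lies relative to `a`, `b`, `c`; as `π` is an involution, the same holds with `x` and `π x`
exchanged. If `a`, `b` or `c` is not a fixed point, this makes `π` map onto itself a segment of
at least two positions that is not everything, or a proper prefix or suffix, which simplicity
forbids. If all three are fixed, `π` swaps the block before `a` with the block between `b` and
`c`, and the block between `a` and `b` with the block after `c`; simplicity forces every block to
be a single point, which gives `5274163`.
-/

section

open Set Function

variable {n : ℕ}

lemma IsInvolution.involutive {π : Equiv.Perm (Fin n)} (h : IsInvolution π) : Involutive π :=
  fun x => by nth_rw 1 [← h]; exact π.symm_apply_apply x

lemma contains_p123_iff (π : Equiv.Perm (Fin n)) :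
    Contains π p123 ↔ ∃ x y z, x < y ∧ y < z ∧ π x < π y ∧ π y < π z := by
  constructor
  · rintro ⟨f, hf, hσ⟩
    exact ⟨f 0, f 1, f 2, hf (by decide), hf (by decide), (hσ 0 1).1 (by decide),
      (hσ 1 2).1 (by decide)⟩
  · rintro ⟨x, y, z, hxy, hyz, hπxy, hπyz⟩
    refine ⟨![x, y, z], fun i j hij => ?_, fun i j => ?_⟩
    · fin_cases i <;> fin_cases j <;> simp at hij ⊢ <;> omega
    · fin_cases i <;> fin_cases j <;> simp [p123] <;> omega

lemma contains_p2341_iff (π : Equiv.Perm (Fin n)) :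
    Contains π p2341 ↔
      ∃ w x y z, w < x ∧ x < y ∧ y < z ∧ π z < π w ∧ π w < π x ∧ π x < π y := by
  constructor
  · rintro ⟨f, hf, hσ⟩
    exact ⟨f 0, f 1, f 2, f 3, hf (by decide), hf (by decide), hf (by decide),
      (hσ 3 0).1 (by decide), (hσ 0 1).1 (by decide), (hσ 1 2).1 (by decide)⟩
  · rintro ⟨w, x, y, z, hwx, hxy, hyz, hπzw, hπwx, hπxy⟩
    refine ⟨![w, x, y, z], fun i j hij => ?_, fun i j => ?_⟩
    · fin_cases i <;> fin_cases j <;> simp at hij ⊢ <;> omega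
    · fin_cases i <;> fin_cases j <;> simp [p2341] <;> omega

lemma contains_p2341_of_4123 {π : Equiv.Perm (Fin n)} (hπ : Involutive π) {w x y z : Fin n}
    (hwx : w < x) (hxy : x < y) (hyz : y < z)
    (hπxy : π x < π y) (hπyz : π y < π z) (hπzw : π z < π w) : Contains π p2341 :=
  (contains_p2341_iff π).2 ⟨π x, π y, π z, π w, hπxy, hπyz, hπzw,
    by rwa [hπ, hπ], by rwa [hπ, hπ], by rwa [hπ, hπ]⟩

lemma Contains.p123_of_p2341 {π : Equiv.Perm (Fin n)} (h : Contains π p2341) :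
    Contains π p123 := by
  obtain ⟨w, x, y, -, hwx, hxy, -, -, hπwx, hπxy⟩ := (contains_p2341_iff π).1 h
  exact (contains_p123_iff π).2 ⟨w, x, y, hwx, hxy, hπwx, hπxy⟩

lemma setContiguous_iff_ordConnected {S : Set (Fin n)} : SetContiguous S ↔ S.OrdConnected :=
  ⟨fun h => ⟨fun _ hi _ hj _ hk => h hi hj hk.1 hk.2⟩,
    fun h _ _ _ hi hj hik hkj => h.out hi hj ⟨hik, hkj⟩⟩

lemma Fin.ncard_Iio (a : Fin n) : (Iio a).ncard = a := by
  rw [← Finset.coe_Iio, ncard_coe_finset, Fin.card_Iio]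

lemma Fin.ncard_Ioi (a : Fin n) : (Ioi a).ncard = n - 1 - a := by
  rw [← Finset.coe_Ioi, ncard_coe_finset, Fin.card_Ioi]

lemma Fin.ncard_Ioo (a b : Fin n) : (Ioo a b).ncard = b - a - 1 := by
  rw [← Finset.coe_Ioo, ncard_coe_finset, Fin.card_Ioo]

lemma Equiv.Perm.ncard_le_of_mapsTo {α : Type*} [Finite α] (π : Equiv.Perm α) {S T : Set α}
    (h : MapsTo π S T) : S.ncard ≤ T.ncard :=
  ncard_le_ncard_of_injOn π h π.injective.injOn

lemma Equiv.Perm.mapsTo_compl {α : Type*} [Finite α] (π : Equiv.Perm α) {S : Set α}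
    (h : MapsTo π S S) : MapsTo π Sᶜ Sᶜ :=
  (((toFinite S).injOn_iff_bijOn_of_mapsTo h).1 π.injective.injOn).surjOn.mapsTo_compl
    π.injective

namespace IsSimple

variable {π : Equiv.Perm (Fin n)}

lemma not_mapsTo (hs : IsSimple π) {S T : Set (Fin n)} [S.OrdConnected] [T.OrdConnected]
    (hcard : T.ncard ≤ S.ncard) (htwo : 1 < S.ncard) {w : Fin n} (hw : w ∉ S) :
    ¬ MapsTo π S T := by
  intro hST
  have himage : π '' S = T := eq_of_subset_of_ncard_le hST.image_subset
    (by rwa [ncard_image_of_injective _ π.injective])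
  have hint : IsPermInterval π S := ⟨setContiguous_iff_ordConnected.2 ‹_›,
    himage ▸ setContiguous_iff_ordConnected.2 ‹_›⟩
  rcases hs.2 S hint with h | rfl
  · omega
  · exact hw (mem_univ w)

lemma not_mapsTo_Icc (hs : IsSimple π) {i j w : Fin n} (hij : i < j) (hw : w < i ∨ j < w) :
    ¬ MapsTo π (Icc i j) (Icc i j) :=
  hs.not_mapsTo le_rfl
    ((one_lt_ncard_iff (toFinite _)).2
      ⟨i, j, left_mem_Icc.2 hij.le, right_mem_Icc.2 hij.le, hij.ne⟩)
    (w := w) (by simp only [mem_Icc]; omega)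

lemma add_one_lt_of_fixed (hs : IsSimple π) {i j w : Fin n} (hi : π i = i) (hj : π j = j)
    (hij : i < j) (hw : w < i ∨ j < w) : (i : ℕ) + 1 < j := by
  by_contra hadj
  refine hs.not_mapsTo_Icc hij hw fun x hx => ?_
  obtain rfl | rfl : x = i ∨ x = j := by simp only [mem_Icc] at hx; omega
  · rwa [hi]
  · rwa [hj]

lemma not_mapsTo_of_ordConnected_compl (hs : IsSimple π) (hn : 3 ≤ n) {S : Set (Fin n)}
    [S.OrdConnected] (hSc : Sᶜ.OrdConnected) {i j : Fin n} (hi : i ∈ S) (hj : j ∉ S) :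
    ¬ MapsTo π S S := by
  intro h
  have hcard := ncard_add_ncard_compl S
  rw [Nat.card_eq_fintype_card, Fintype.card_fin] at hcard
  by_cases hS : 1 < S.ncard
  · exact hs.not_mapsTo le_rfl hS hj h
  · exact hs.not_mapsTo le_rfl (by omega) (w := i) (by simpa) (π.mapsTo_compl h)

end IsSimple

structure IsLeftmost123 (π : Equiv.Perm (Fin n)) (a b c : Fin n) : Prop where
  lt_ab : a < b
  lt_bc : b < c
  apply_lt_ab : π a < π b
  apply_lt_bc : π b < π c
  end_le : ∀ x y z, x < y → y < z → π x < π y → π y < π z → c ≤ z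
  mid_le : ∀ x y, x < y → y < c → π x < π y → π y < π c → b ≤ y
  start_le : ∀ x, x < b → π x < π b → a ≤ x

lemma exists_isLeftmost123 {π : Equiv.Perm (Fin n)} (h : Contains π p123) :
    ∃ a b c, IsLeftmost123 π a b c := by
  obtain ⟨x₀, y₀, z₀, h₀⟩ := (contains_p123_iff π).1 h
  obtain ⟨c, ⟨x₁, y₁, hc⟩, hc_min⟩ := wellFounded_lt.has_min
    {z | ∃ x y, x < y ∧ y < z ∧ π x < π y ∧ π y < π z} ⟨z₀, x₀, y₀, h₀⟩
  obtain ⟨b, ⟨x₂, hb⟩, hb_min⟩ := wellFounded_lt.has_min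
    {y | ∃ x, x < y ∧ y < c ∧ π x < π y ∧ π y < π c} ⟨y₁, x₁, hc⟩
  obtain ⟨a, ha, ha_min⟩ := wellFounded_lt.has_min {x | x < b ∧ π x < π b}
    ⟨x₂, hb.1, hb.2.2.1⟩
  exact ⟨a, b, c, ha.1, hb.2.1, ha.2, hb.2.2.2,
    fun x y z h₁ h₂ h₃ h₄ => not_lt.1 (hc_min z ⟨x, y, h₁, h₂, h₃, h₄⟩),
    fun x y h₁ h₂ h₃ h₄ => not_lt.1 (hb_min y ⟨x, h₁, h₂, h₃, h₄⟩),
    fun x h₁ h₂ => not_lt.1 (ha_min x ⟨h₁, h₂⟩)⟩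

namespace IsLeftmost123

variable {π : Equiv.Perm (Fin n)} {a b c x y : Fin n}

lemma apply_mem_Ioo_of_lt_start (h : IsLeftmost123 π a b c) (hπ : Involutive π)
    (hav : ¬ Contains π p2341) (hx : x < a) : π x ∈ Ioo (π b) (π c) := by
  have hxb : π x ≠ π b := π.injective.ne (by have := h.lt_ab; omega)
  have hxc : π x ≠ π c := π.injective.ne (by have := h.lt_ab; have := h.lt_bc; omega)
  constructor
  · by_contra! hle
    have := h.start_le x (by have := h.lt_ab; omega) (lt_of_le_of_ne hle hxb)
    omega
  · by_contra! hle
    exact hav (contains_p2341_of_4123 hπ hx h.lt_ab h.lt_bc h.apply_lt_ab h.apply_lt_bc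
      (lt_of_le_of_ne hle hxc.symm))

lemma apply_lt_or_lt_of_start_lt_of_lt_mid (h : IsLeftmost123 π a b c) (hx₁ : a < x)
    (hx₂ : x < b) : π x < π a ∨ π c < π x := by
  have hxa : π x ≠ π a := π.injective.ne (by omega)
  have hxc : π x ≠ π c := π.injective.ne (by have := h.lt_bc; omega)
  by_contra! hx
  have := h.mid_le a x hx₁ (hx₂.trans h.lt_bc) (lt_of_le_of_ne hx.1 hxa.symm)
    (lt_of_le_of_ne hx.2 hxc)
  omega

lemma apply_lt_apply_mid_of_mid_lt_of_lt_end (h : IsLeftmost123 π a b c) (hx₁ : b < x)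
    (hx₂ : x < c) : π x < π b := by
  have hxb : π x ≠ π b := π.injective.ne (by omega)
  by_contra! hx
  have := h.end_le a b x h.lt_ab hx₁ h.apply_lt_ab (lt_of_le_of_ne hx hxb.symm)
  omega

lemma apply_start_lt_of_end_lt (h : IsLeftmost123 π a b c) (hav : ¬ Contains π p2341)
    (hx : c < x) : π a < π x := by
  have hxa : π x ≠ π a := π.injective.ne (by have := h.lt_ab; have := h.lt_bc; omega)
  by_contra! hle
  exact hav ((contains_p2341_iff π).2 ⟨a, b, c, x, h.lt_ab, h.lt_bc, hx,
    lt_of_le_of_ne hle hxa, h.apply_lt_ab, h.apply_lt_bc⟩)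

lemma end_le_apply_end (h : IsLeftmost123 π a b c) (hπ : Involutive π) : c ≤ π c :=
  h.end_le (π a) (π b) (π c) h.apply_lt_ab h.apply_lt_bc (by simpa [hπ _] using h.lt_ab)
    (by simpa [hπ _] using h.lt_bc)

lemma mid_le_apply_mid (h : IsLeftmost123 π a b c) (hπ : Involutive π)
    (hav : ¬ Contains π p2341) : b ≤ π b := by
  by_contra! hb
  have hc := h.end_le_apply_end hπ
  rcases lt_trichotomy (π b) a with hba | hba | hba
  · have h₁ := h.apply_mem_Ioo_of_lt_start hπ hav hba
    have h₂ := h.apply_mem_Ioo_of_lt_start hπ hav (h.apply_lt_ab.trans hba)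
    rw [mem_Ioo, hπ] at h₁ h₂
    have := h.mid_le (π a) (π b) h.apply_lt_ab (by have := h.lt_ab; have := h.lt_bc; omega)
      (by simpa [hπ _] using h.lt_ab) (by rw [hπ]; exact h₁.2)
    omega
  · have := h.apply_lt_ab
    rw [← hπ.eq_iff.1 hba] at this
    omega
  · have := h.apply_lt_or_lt_of_start_lt_of_lt_mid hba hb
    rw [hπ] at this
    have := h.apply_lt_ab
    have := h.lt_bc
    omega

lemma start_le_apply_start (h : IsLeftmost123 π a b c) (hπ : Involutive π)
    (hav : ¬ Contains π p2341) : a ≤ π a := by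
  by_contra! ha
  have := h.apply_mem_Ioo_of_lt_start hπ hav ha
  rw [mem_Ioo, hπ] at this
  have := h.mid_le_apply_mid hπ hav
  have := h.lt_ab
  omega

lemma apply_mem_Ioo_of_start_lt_of_lt_mid (h : IsLeftmost123 π a b c) (hπ : Involutive π)
    (hav : ¬ Contains π p2341) (hx₁ : a < x) (hx₂ : x < b) (hx₃ : x < π a) :
    π x ∈ Ioo a (π a) := by
  have hc := h.end_le_apply_end hπ
  have hb := h.mid_le_apply_mid hπ hav
  have hxa : π x ≠ a := fun e => by rw [hπ.eq_iff] at e; omega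
  constructor
  · by_contra! hle
    have := h.apply_mem_Ioo_of_lt_start hπ hav (lt_of_le_of_ne hle hxa)
    rw [mem_Ioo, hπ] at this
    omega
  · refine (h.apply_lt_or_lt_of_start_lt_of_lt_mid hx₁ hx₂).resolve_right fun hlt => ?_
    have := h.apply_start_lt_of_end_lt hav (lt_of_le_of_lt hc hlt)
    rw [hπ] at this
    omega

lemma apply_lt_end_of_le_apply_start (h : IsLeftmost123 π a b c) (hπ : Involutive π)
    (hav : ¬ Contains π p2341) (hyc : y < c) (hya : y ≤ π a) : π y < c := by
  have hc := h.end_le_apply_end hπ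
  refine lt_of_le_of_ne (not_lt.1 fun hlt => ?_) fun e => ?_
  · have := h.apply_start_lt_of_end_lt hav hlt
    rw [hπ] at this
    omega
  · rw [hπ.eq_iff] at e
    omega

lemma mid_lt_apply_start_of_ne (hs : IsSimple π) (h : IsLeftmost123 π a b c)
    (hπ : Involutive π) (hav : ¬ Contains π p2341) (hne : π a ≠ a) : b < π a := by
  have hb := h.mid_le_apply_mid hπ hav
  have ha : a < π a := lt_of_le_of_ne (h.start_le_apply_start hπ hav) (Ne.symm hne)
  have hac := h.apply_lt_end_of_le_apply_start hπ hav (h.lt_ab.trans h.lt_bc) ha.le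
  refine lt_of_le_of_ne (not_lt.1 fun hπa => ?_) fun e => ?_
  · refine hs.not_mapsTo_Icc ha (w := c) (Or.inr hac) fun x hx => ?_
    obtain ⟨hx₁, hx₂⟩ := hx
    obtain rfl | hx₁ := hx₁.eq_or_lt
    · exact ⟨ha.le, le_rfl⟩
    obtain rfl | hx₂ := hx₂.eq_or_lt
    · rw [hπ]; exact ⟨le_rfl, ha.le⟩
    have := h.apply_mem_Ioo_of_start_lt_of_lt_mid hπ hav hx₁ (hx₂.trans hπa) hx₂
    exact ⟨this.1.le, this.2.le⟩
  · rw [eq_comm, hπ.eq_iff] at e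
    have := h.lt_ab
    omega

lemma apply_start_eq (hs : IsSimple π) (h : IsLeftmost123 π a b c) (hπ : Involutive π)
    (hav : ¬ Contains π p2341) : π a = a := by
  have hab := h.lt_ab
  have hπab := h.apply_lt_ab
  have hb := h.mid_le_apply_mid hπ hav
  by_contra hne
  have hπa := h.mid_lt_apply_start_of_ne hs hπ hav hne
  have hbc := h.apply_lt_end_of_le_apply_start hπ hav h.lt_bc hπa.le
  refine hs.not_mapsTo_Icc (hab.trans_le hb) (w := c) (Or.inr hbc) fun x hx => ?_
  obtain ⟨hx₁, hx₂⟩ := hx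
  obtain rfl | hx₁ := hx₁.eq_or_lt
  · exact ⟨h.start_le_apply_start hπ hav, hπab.le⟩
  rcases lt_trichotomy x b with hxb | rfl | hxb
  · have := h.apply_mem_Ioo_of_start_lt_of_lt_mid hπ hav hx₁ hxb (hxb.trans hπa)
    exact ⟨this.1.le, this.2.le.trans hπab.le⟩
  · exact ⟨hx₁.le.trans hb, le_rfl⟩
  obtain rfl | hx₂ := hx₂.eq_or_lt
  · rw [hπ]; exact ⟨hab.le, hb⟩
  refine ⟨not_lt.1 fun hlt => ?_,
    (h.apply_lt_apply_mid_of_mid_lt_of_lt_end hxb (hx₂.trans hbc)).le⟩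
  have := h.apply_mem_Ioo_of_lt_start hπ hav hlt
  rw [mem_Ioo, hπ] at this
  omega

lemma lt_apply_of_mid_lt_of_lt_apply_mid (h : IsLeftmost123 π a b c) (hπ : Involutive π)
    (hav : ¬ Contains π p2341) (ha : π a = a) (hx₁ : b < x) (hx₂ : x < π b)
    (hbc : π b < c) : b < π x := by
  have hc := h.end_le_apply_end hπ
  have hab := h.lt_ab
  have h₁ : π x < a → π b < x := fun hlt => by
    simpa only [hπ x] using (h.apply_mem_Ioo_of_lt_start hπ hav hlt).1
  have h₂ : a < π x → π x < b → x < a ∨ π c < x := fun hlt₁ hlt₂ => by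
    simpa only [hπ x, ha] using h.apply_lt_or_lt_of_start_lt_of_lt_mid hlt₁ hlt₂
  have h₃ : π x ≠ a := fun e => by rw [hπ.eq_iff, ha] at e; omega
  have h₄ : π x ≠ b := fun e => by rw [hπ.eq_iff] at e; omega
  have := h.mid_le_apply_mid hπ hav
  omega

lemma apply_mid_eq (hs : IsSimple π) (h : IsLeftmost123 π a b c) (hπ : Involutive π)
    (hav : ¬ Contains π p2341) (ha : π a = a) : π b = b := by
  have hab := h.lt_ab
  have hbc := h.lt_bc
  have hc := h.end_le_apply_end hπ
  by_contra hne
  have hb : b < π b := lt_of_le_of_ne (h.mid_le_apply_mid hπ hav) (Ne.symm hne)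
  by_cases hπbc : π b < c
  · refine hs.not_mapsTo_Icc hb (w := a) (Or.inl hab) fun x hx => ?_
    obtain ⟨hx₁, hx₂⟩ := hx
    obtain rfl | hx₁ := hx₁.eq_or_lt
    · exact ⟨hb.le, le_rfl⟩
    obtain rfl | hx₂ := hx₂.eq_or_lt
    · rw [hπ]; exact ⟨le_rfl, hb.le⟩
    exact ⟨(h.lt_apply_of_mid_lt_of_lt_apply_mid hπ hav ha hx₁ hx₂ hπbc).le,
      (h.apply_lt_apply_mid_of_mid_lt_of_lt_end hx₁ (hx₂.trans hπbc)).le⟩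
  · have hcb : c < π b := lt_of_le_of_ne (not_lt.1 hπbc) fun e => by
      rw [eq_comm, hπ.eq_iff] at e; omega
    have hmin : ∀ x, ¬ x < a := fun x hx => by
      have := h.apply_start_lt_of_end_lt hav
        (hcb.trans (h.apply_mem_Ioo_of_lt_start hπ hav hx).1)
      rw [hπ, ha] at this
      omega
    refine hs.not_mapsTo_of_ordConnected_compl (S := Iic a) (by omega)
      (by rw [compl_Iic]; infer_instance) (i := a) (j := b) self_mem_Iic (by simpa)
      fun x hx => ?_
    obtain rfl : x = a := le_antisymm hx (not_lt.1 (hmin x))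
    exact ha.le

lemma apply_end_eq (hs : IsSimple π) (h : IsLeftmost123 π a b c) (hπ : Involutive π)
    (hav : ¬ Contains π p2341) (ha : π a = a) (hb : π b = b) : π c = c := by
  have hab := h.lt_ab
  have hbc := h.lt_bc
  by_contra hne
  have hc : c < π c := lt_of_le_of_ne (h.end_le_apply_end hπ) (Ne.symm hne)
  obtain ⟨y, hy₁, hy₂⟩ : ∃ y, a < y ∧ y < b :=
    have := hs.add_one_lt_of_fixed ha hb hab (w := c) (Or.inr hbc)
    ⟨⟨a + 1, by omega⟩, by simp only [Fin.lt_def]; omega⟩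
  have hy : π c < π y := by
    refine (h.apply_lt_or_lt_of_start_lt_of_lt_mid hy₁ hy₂).resolve_left fun hlt => ?_
    have := (h.apply_mem_Ioo_of_lt_start hπ hav (ha ▸ hlt)).1
    rw [hπ, hb] at this
    omega
  refine hs.not_mapsTo_Icc hc (w := a) (Or.inl (hab.trans hbc)) fun x hx => ?_
  obtain ⟨hx₁, hx₂⟩ := hx
  obtain rfl | hx₁ := hx₁.eq_or_lt
  · exact ⟨hc.le, le_rfl⟩
  obtain rfl | hx₂ := hx₂.eq_or_lt
  · rw [hπ]; exact ⟨le_rfl, hc.le⟩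
  constructor
  · have h₁ : a < π x := ha ▸ h.apply_start_lt_of_end_lt hav hx₁
    have h₂ : a < π x → π x < b → x < a ∨ π c < x := fun hlt₁ hlt₂ => by
      simpa only [hπ x, ha] using h.apply_lt_or_lt_of_start_lt_of_lt_mid hlt₁ hlt₂
    have h₃ : b < π x → π x < c → x < b := fun hlt₁ hlt₂ => by
      simpa only [hπ x, hb] using h.apply_lt_apply_mid_of_mid_lt_of_lt_end hlt₁ hlt₂
    have h₄ : π x ≠ b := fun e => by rw [hπ.eq_iff, hb] at e; omega
    have h₅ : π x ≠ c := fun e => by rw [hπ.eq_iff] at e; omega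
    omega
  · refine not_lt.1 fun hlt => hav ((contains_p2341_iff π).2
      ⟨b, c, x, π y, hbc, hx₁, hx₂.trans hy, ?_, ?_, hlt⟩)
    · rw [hπ, hb]; exact hy₂
    · rw [hb]; exact hbc.trans hc

lemma apply_le_end_of_end_lt (hs : IsSimple π) (h : IsLeftmost123 π a b c) (hπ : Involutive π)
    (hav : ¬ Contains π p2341) (hb : π b = b) (hc : π c = c) (hx : c < x) : π x ≤ c := by
  have hbc := h.lt_bc
  by_contra! hcx
  obtain ⟨t, ⟨hct, hcπt⟩, ht_min⟩ :=
    wellFounded_lt.has_min {t | c < t ∧ c < π t} ⟨x, hx, hcx⟩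
  -- after `t`, a value below `b` would complete `2341` with `b`, `c`, `t`
  have hsuffix : ∀ y, t ≤ y → c < π y := fun y hy => by
    obtain rfl | hty := hy.eq_or_lt
    · exact hcπt
    have h₁ : b < π y → π y < c → y < b := fun hlt₁ hlt₂ => by
      simpa only [hπ y, hb] using h.apply_lt_apply_mid_of_mid_lt_of_lt_end hlt₁ hlt₂
    have h₂ : ¬ π y < b := fun hlt => hav ((contains_p2341_iff π).2
      ⟨b, c, t, y, hbc, hct, hty, by rwa [hb], by rwa [hb, hc], by rwa [hc]⟩)
    have h₃ : π y ≠ b := fun e => by rw [hπ.eq_iff, hb] at e; omega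
    have h₄ : π y ≠ c := fun e => by rw [hπ.eq_iff, hc] at e; omega
    omega
  refine hs.not_mapsTo_of_ordConnected_compl (S := Ici t) (by omega)
    (by rw [compl_Ici]; infer_instance) (i := t) (j := c) self_mem_Ici (by simpa)
      fun y hy => ?_
  exact not_lt.1 (ht_min (π y) ⟨hsuffix y hy, by rw [hπ]; exact hct.trans_le hy⟩)

lemma mapsTo_Iio_start (h : IsLeftmost123 π a b c) (hπ : Involutive π)
    (hav : ¬ Contains π p2341) (hb : π b = b) (hc : π c = c) :
    MapsTo π (Iio a) (Ioo b c) := fun x hx => by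
  simpa only [hb, hc, mem_Ioo] using h.apply_mem_Ioo_of_lt_start hπ hav hx

lemma mapsTo_Ioo_start_mid (h : IsLeftmost123 π a b c) (hπ : Involutive π)
    (hav : ¬ Contains π p2341) (ha : π a = a) (hc : π c = c) :
    MapsTo π (Ioo a b) (Ioi c) := fun x hx => by
  refine (ha ▸ hc ▸ h.apply_lt_or_lt_of_start_lt_of_lt_mid hx.1 hx.2).resolve_left
    fun hlt => ?_
  have := (h.apply_mem_Ioo_of_lt_start hπ hav hlt).1
  rw [hπ] at this
  have := h.mid_le_apply_mid hπ hav
  have := hx.2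
  omega

lemma mapsTo_Ioo_mid_end (h : IsLeftmost123 π a b c) (hπ : Involutive π) (ha : π a = a)
    (hb : π b = b) (hc : π c = c) : MapsTo π (Ioo b c) (Iio a) := fun x hx => by
  have hab := h.lt_ab
  have h₁ : π x < b := hb ▸ h.apply_lt_apply_mid_of_mid_lt_of_lt_end hx.1 hx.2
  have h₂ : a < π x → π x < b → x < a ∨ c < x := fun hlt₁ hlt₂ => by
    simpa only [hπ x, ha, hc] using h.apply_lt_or_lt_of_start_lt_of_lt_mid hlt₁ hlt₂
  have h₃ : π x ≠ a := fun e => by rw [hπ.eq_iff, ha] at e; have := hx.1; omega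
  have := hx.1
  have := hx.2
  simp only [mem_Iio]
  omega

lemma mapsTo_Ioi_end (hs : IsSimple π) (h : IsLeftmost123 π a b c) (hπ : Involutive π)
    (hav : ¬ Contains π p2341) (ha : π a = a) (hb : π b = b) (hc : π c = c) :
    MapsTo π (Ioi c) (Ioo a b) := fun x hx => by
  have hbc := h.lt_bc
  have h₁ : a < π x := ha ▸ h.apply_start_lt_of_end_lt hav hx
  have h₂ : π x ≤ c := h.apply_le_end_of_end_lt hs hπ hav hb hc hx
  have h₃ : b < π x → π x < c → x < b := fun hlt₁ hlt₂ => by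
    simpa only [hπ x, hb] using h.apply_lt_apply_mid_of_mid_lt_of_lt_end hlt₁ hlt₂
  have h₄ : π x ≠ b := fun e => by rw [hπ.eq_iff, hb] at e; have : c < x := hx; omega
  have h₅ : π x ≠ c := fun e => by rw [hπ.eq_iff, hc] at e; have : c < x := hx; omega
  have : c < x := hx
  simp only [mem_Ioo]
  omega

lemma length_and_positions_eq_of_fixed (hs : IsSimple π) (h : IsLeftmost123 π a b c)
    (hπ : Involutive π) (hav : ¬ Contains π p2341) (ha : π a = a) (hb : π b = b)
    (hc : π c = c) : n = 7 ∧ (a : ℕ) = 1 ∧ (b : ℕ) = 3 ∧ (c : ℕ) = 5 := by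
  have hab := h.lt_ab
  have hbc := h.lt_bc
  have hA := h.mapsTo_Iio_start hπ hav hb hc
  have hB := h.mapsTo_Ioo_start_mid hπ hav ha hc
  have hC := h.mapsTo_Ioo_mid_end hπ ha hb hc
  have hD := h.mapsTo_Ioi_end hs hπ hav ha hb hc
  have hAC := π.ncard_le_of_mapsTo hC
  have hBD := π.ncard_le_of_mapsTo hB
  have hA₁ : (Iio a).ncard ≤ 1 := not_lt.1 fun h₂ =>
    hs.not_mapsTo (π.ncard_le_of_mapsTo hC) h₂ (w := a) (by simp) hA
  have hB₁ : (Ioo a b).ncard ≤ 1 := not_lt.1 fun h₂ =>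
    hs.not_mapsTo (π.ncard_le_of_mapsTo hD) h₂ (w := a) (by simp) hB
  have hC₁ : (Ioo b c).ncard ≤ 1 := not_lt.1 fun h₂ =>
    hs.not_mapsTo (π.ncard_le_of_mapsTo hA) h₂ (w := a) (by simp; omega) hC
  have hD₁ : (Ioi c).ncard ≤ 1 := not_lt.1 fun h₂ =>
    hs.not_mapsTo (π.ncard_le_of_mapsTo hB) h₂ (w := a) (by simp; omega) hD
  have hab₁ := hs.add_one_lt_of_fixed ha hb hab (w := c) (Or.inr hbc)
  have hbc₁ := hs.add_one_lt_of_fixed hb hc hbc (w := a) (Or.inl hab)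
  simp only [Fin.ncard_Iio, Fin.ncard_Ioo, Fin.ncard_Ioi] at hA₁ hB₁ hC₁ hD₁ hAC hBD
  omega

lemma eq_p5274163 (hs : IsSimple π) (h : IsLeftmost123 π a b c) (hπ : Involutive π)
    (hav : ¬ Contains π p2341) (ha : π a = a) (hb : π b = b) (hc : π c = c) :
    ∃ h : n = 7, π = (finCongr h.symm).permCongr p5274163 := by
  obtain ⟨hn, ha₁, hb₃, hc₅⟩ := h.length_and_positions_eq_of_fixed hs hπ hav ha hb hc
  have hA := h.mapsTo_Iio_start hπ hav hb hc
  have hB := h.mapsTo_Ioo_start_mid hπ hav ha hc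
  have hC := h.mapsTo_Ioo_mid_end hπ ha hb hc
  have hD := h.mapsTo_Ioi_end hs hπ hav ha hb hc
  subst hn
  obtain rfl : a = 1 := Fin.ext ha₁
  obtain rfl : b = 3 := Fin.ext hb₃
  obtain rfl : c = 5 := Fin.ext hc₅
  refine ⟨rfl, Equiv.ext fun x => ?_⟩
  have := @hA x
  have := @hB x
  have := @hC x
  have := @hD x
  fin_cases x <;> simp [p5274163] at * <;> omega

end IsLeftmost123

lemma not_contains_p5274163_p2341 : ¬ Contains p5274163 p2341 := by
  rw [contains_p2341_iff]
  decide

end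

/-- A simple involution avoids `2341` iff it is the permutation `5274163` or it
avoids `123`. -/
theorem simple_involution_av2341_iff {n : ℕ} (π : Equiv.Perm (Fin n))
    (hsimple : IsSimple π) (hinv : IsInvolution π) :
    ¬ Contains π p2341 ↔
      ((∃ h : n = 7, π = (finCongr h.symm).permCongr p5274163) ∨ ¬ Contains π p123) := by
  have hπ := hinv.involutive
  constructor
  · refine fun hav => or_iff_not_imp_right.2 fun h123 => ?_
    obtain ⟨a, b, c, h⟩ := exists_isLeftmost123 (not_not.1 h123)
    have ha := h.apply_start_eq hsimple hπ hav
    have hb := h.apply_mid_eq hsimple hπ hav ha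
    exact h.eq_p5274163 hsimple hπ hav ha hb (h.apply_end_eq hsimple hπ hav ha hb)
  · rintro (⟨rfl, rfl⟩ | h123) h2341
    · exact not_contains_p5274163_p2341 h2341
    · exact h123 h2341.p123_of_p2341
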